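/- Let R be a commutative ring, N an R-module, and M ⊆ N a submodule. Define the w-closure of M in N by cl_N(M) = {x ∈ N : Jx ⊆ M for some GV-ideal J of R}. Then the w-closure operation is idempotent: cl_N(cl_N(M)) = cl_N(M). In particular, for a GV-torsion-free R-module M with w-envelope M_w taken inside an injective hull, one has (M_w)_w = M_w. -/

import Mathlib

/-!
If `J x ⊆ cl(M)` for a GV-ideal `J = (g₁, …, gₙ)`, pick GV-ideals `Jᵢ` with `Jᵢ gᵢ x ⊆ M`.
Then `(J₁ ⋯ Jₙ) J x ⊆ M`, and `J₁ ⋯ Jₙ J` is again a GV-ideal because GV-ideals are closed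
under products. Finite generation of `J` is what makes finitely many `Jᵢ` suffice.
-/

universe u v

section WDefs

variable (R : Type u) [CommRing R]

/-- The canonical `R`-linear map `R → Hom_R(J, R)`, `r ↦ (j ↦ r * j)`. -/
def gvCanonicalMap (J : Ideal R) : R →ₗ[R] (J →ₗ[R] R) where
  toFun r := r • (J.subtype)
  map_add' x y := add_smul x y _
  map_smul' r x := by simp [mul_smul]

/-- A finitely generated ideal `J` of `R` is a GV-ideal (Glaz–Vasconcelos ideal)
if the canonical map `R → Hom_R(J, R)` is an isomorphism. -/
def IsGVIdeal (J : Ideal R) : Prop :=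
  J.FG ∧ Function.Bijective (gvCanonicalMap R J)

/-- An ideal `I` of `R` is a w-ideal if whenever `J x ⊆ I` for some GV-ideal `J`,
then `x ∈ I`. -/
def IsWIdeal (I : Ideal R) : Prop :=
  ∀ x : R, (∃ J : Ideal R, IsGVIdeal R J ∧ ∀ j ∈ J, j * x ∈ I) → x ∈ I

/-- `m` is a maximal w-ideal: maximal among the proper w-ideals of `R`. -/
def IsMaxWIdeal (m : Ideal R) : Prop :=
  IsWIdeal R m ∧ m ≠ ⊤ ∧ ∀ I : Ideal R, IsWIdeal R I → I ≠ ⊤ → m ≤ I → I = m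

variable {M : Type v} [AddCommGroup M] [Module R M]

/-- `x` is a GV-torsion element if it is killed by some GV-ideal. -/
def IsGVTorsionElem (x : M) : Prop :=
  ∃ J : Ideal R, IsGVIdeal R J ∧ ∀ j ∈ J, j • x = 0

variable (M)

/-- `M` is GV-torsion-free if it has no nonzero GV-torsion element. -/
def IsGVTorsionFree : Prop := ∀ x : M, IsGVTorsionElem R x → x = 0

/-- `M` is GV-torsion if all its elements are GV-torsion. -/
def IsGVTorsion : Prop := ∀ x : M, IsGVTorsionElem R x

/-- `M` is a w-module: GV-torsion-free and every map from a GV-ideal to `M`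
extends to `R`. -/
def IsWModule : Prop :=
  IsGVTorsionFree R M ∧
    ∀ J : Ideal R, IsGVIdeal R J → ∀ f : J →ₗ[R] M,
      ∃ g : R →ₗ[R] M, ∀ x : J, g (x : R) = f x

end WDefs

/-- The w-closure of a subset `M` of an `R`-module `N`:
all `x ∈ N` with `J x ⊆ M` for some GV-ideal `J`. -/
def wClosure (R : Type u) [CommRing R] {N : Type v} [AddCommGroup N] [Module R N]
    (M : Set N) : Set N :=
  {x | ∃ J : Ideal R, IsGVIdeal R J ∧ ∀ j ∈ J, j • x ∈ M}

theorem Submodule.colon_singleton_smul {R M : Type*} [CommRing R] [AddCommGroup M] [Module R M]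
    (N : Submodule R M) (r : R) (x : M) : N.colon {r • x} = (N.colon {x}).colon {r} := by
  ext
  simp [mul_smul]

theorem Ideal.mul_span_le_iff_forall_le_colon {R : Type*} [CommRing R] {P C : Ideal R}
    {s : Set R} : P * Ideal.span s ≤ C ↔ ∀ g ∈ s, P ≤ C.colon {g} :=
  calc P * Ideal.span s ≤ C ↔ Ideal.span s ≤ C.colon (P : Set R) := by
        rw [mul_comm, Submodule.mul_le]
        simp [SetLike.le_def, Submodule.mem_colon]
    _ ↔ ∀ g ∈ s, P ≤ C.colon {g} := by
        rw [Ideal.span_le]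
        simp [Set.subset_def, SetLike.le_def, Submodule.mem_colon, mul_comm]

section GVIdeal

variable {R : Type u} [CommRing R] {J K : Ideal R}

@[simp]
theorem gvCanonicalMap_apply (r : R) (j : J) : gvCanonicalMap R J r j = r * j := rfl

namespace IsGVIdeal

theorem eq_zero_of_forall_mul_eq_zero (hJ : IsGVIdeal R J) {r : R}
    (h : ∀ j ∈ J, r * j = 0) : r = 0 :=
  (injective_iff_map_eq_zero _).1 hJ.2.1 r (LinearMap.ext fun j => h j j.2)

theorem top : IsGVIdeal R (⊤ : Ideal R) := by
  refine ⟨Module.Finite.fg_top, ?_, fun f => ⟨f ⟨1, trivial⟩, ?_⟩⟩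
  · exact (injective_iff_map_eq_zero _).2 fun r hr => by
      simpa using LinearMap.congr_fun hr ⟨1, trivial⟩
  · ext ⟨x, hx⟩
    have hx1 : (⟨x, hx⟩ : (⊤ : Ideal R)) = x • ⟨1, trivial⟩ := Subtype.ext (mul_one x).symm
    rw [hx1, map_smul, map_smul, gvCanonicalMap_apply, smul_eq_mul, smul_eq_mul, mul_one,
      mul_comm]

/-- For `f : J * K → R` and fixed `k`, the map `j ↦ f (j k)` is multiplication by some `r k`
since `J` is GV; `k ↦ r k` is linear, hence multiplication by some `ρ` since `K` is GV, and
`f = ρ ·` because `J * K` is spanned by the products `j k`. -/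
theorem mul (hJ : IsGVIdeal R J) (hK : IsGVIdeal R K) : IsGVIdeal R (J * K) := by
  refine ⟨hJ.1.mul hK.1, (injective_iff_map_eq_zero _).2 fun a ha => ?_, fun f => ?_⟩
  · refine hK.eq_zero_of_forall_mul_eq_zero fun k hk => hJ.eq_zero_of_forall_mul_eq_zero
      fun j hj => ?_
    simpa [mul_assoc, mul_comm j] using LinearMap.congr_fun ha ⟨j * k, Ideal.mul_mem_mul hj hk⟩
  · let eJ := LinearEquiv.ofBijective _ hJ.2
    let eK := LinearEquiv.ofBijective _ hK.2
    let g : K →ₗ[R] J →ₗ[R] R := (TensorProduct.curry (f ∘ₗ Submodule.mulMap' J K)).flip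
    let r : K →ₗ[R] R := eJ.symm.toLinearMap ∘ₗ g
    have hg (k : K) (j : J) : r k * j = g k j :=
      LinearMap.congr_fun (eJ.apply_symm_apply (g k)) j
    have hr (k : K) : eK.symm r * k = r k := LinearMap.congr_fun (eK.apply_symm_apply r) k
    refine ⟨eK.symm r, (LinearMap.cancel_right (Submodule.mulMap'_surjective J K)).1
      (TensorProduct.ext' fun j k => ?_)⟩
    change eK.symm r * (j * k) = g k j
    rw [← hg, ← hr]
    ring

end IsGVIdeal

theorem exists_isGVIdeal_le_finsetInf {ι : Type*} (s : Finset ι) {I : ι → Ideal R}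
    (h : ∀ i ∈ s, ∃ J, IsGVIdeal R J ∧ J ≤ I i) : ∃ P, IsGVIdeal R P ∧ P ≤ s.inf I := by
  choose! J hJ hJI using h
  refine ⟨∏ i ∈ s, J i, Finset.prod_induction _ _ (fun _ _ => IsGVIdeal.mul)
    (Ideal.one_eq_top (R := R) ▸ .top) hJ, ?_⟩
  exact Ideal.prod_le_inf.trans (Finset.inf_mono_fun hJI)

end GVIdeal

section wClosure

variable {R : Type u} [CommRing R] {N : Type v} [AddCommGroup N] [Module R N]

theorem mem_wClosure_iff_exists_le_colon {M : Submodule R N} {x : N} :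
    x ∈ wClosure R (M : Set N) ↔ ∃ J, IsGVIdeal R J ∧ J ≤ M.colon {x} := by
  simp [wClosure, SetLike.le_def]

theorem wClosure_mono {S T : Set N} (h : S ⊆ T) : wClosure R S ⊆ wClosure R T :=
  fun _ ⟨J, hJ, hJx⟩ => ⟨J, hJ, fun j hj => h (hJx j hj)⟩

theorem subset_wClosure (M : Submodule R N) : (M : Set N) ⊆ wClosure R M :=
  fun _ hx => ⟨⊤, .top, fun j _ => M.smul_mem j hx⟩

theorem wClosure_wClosure_subset (M : Submodule R N) :
    wClosure R (wClosure R (M : Set N)) ⊆ wClosure R M := by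
  rintro x ⟨J, hJ, hJx⟩
  obtain ⟨s, rfl⟩ := hJ.1
  obtain ⟨P, hP, hPs⟩ := exists_isGVIdeal_le_finsetInf s (I := fun g => M.colon {g • x})
    fun g hg => mem_wClosure_iff_exists_le_colon.1 (hJx g (Ideal.subset_span hg))
  refine mem_wClosure_iff_exists_le_colon.2 ⟨P * Ideal.span s, hP.mul hJ, ?_⟩
  refine Ideal.mul_span_le_iff_forall_le_colon.2 fun g hg => ?_
  rw [← Submodule.colon_singleton_smul]
  exact hPs.trans (Finset.inf_le hg)

end wClosure

/-- The w-closure operation on submodules is idempotent: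
`cl_N(cl_N(M)) = cl_N(M)`. -/
theorem wClosure_idem (R : Type u) [CommRing R] {N : Type v} [AddCommGroup N] [Module R N]
    (M : Submodule R N) :
    wClosure R (wClosure R (M : Set N)) = wClosure R (M : Set N) :=
  (wClosure_wClosure_subset M).antisymm (wClosure_mono (subset_wClosure M))
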